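/- arXiv:0804.1887 — 4 statements merged into one kernel-verified Lean document; each statement's English description precedes it below -/
import Mathlib

section
/- Let g₁, g₂ : [0,1] → ℝ be monofractal functions with pointwise Hölder exponents constantly equal to H₁ and H₂ respectively, where 0 < H₁ < H₂ < 1. Then there is no continuous strictly increasing surjection f : [0,1] → [0,1] with g₁ = g₂ ∘ f. -/
/-!
Since `f` is monotone it is differentiable at some interior point `t`, hence Lipschitz at `t`:
`|f s - f t| ≤ K |s - t|` near `t`. A Hölder bound `|g₂ u - g₂ (f t)| ≤ C |u - f t|^β` therefore
gives `|g₁ s - g₁ t| ≤ C K^β |s - t|^β`, so the Hölder exponent of `g₁ = g₂ ∘ f` at `t` is at least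
that of `g₂` at `f t`, i.e. `H₁ ≥ H₂`.
-/

open Set Filter Topology

/-- Pointwise Hölder exponent (for exponents `< 1` the polynomial is a constant). -/
noncomputable def holderExp (Z : ℝ → ℝ) (t : ℝ) : ℝ :=
  sSup {α : ℝ | 0 ≤ α ∧ ∃ C > (0:ℝ), ∃ δ > (0:ℝ), ∀ s, |s - t| < δ →
    |Z s - Z t| ≤ C * |s - t| ^ α}

open MeasureTheory Asymptotics

def holderSet (Z : ℝ → ℝ) (t : ℝ) : Set ℝ :=
  {α : ℝ | 0 ≤ α ∧ ∃ C > (0:ℝ), ∃ δ > (0:ℝ), ∀ s, |s - t| < δ → |Z s - Z t| ≤ C * |s - t| ^ α}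

section HolderExponent

variable {Z Z₁ Z₂ : ℝ → ℝ} {t t₁ t₂ α : ℝ}

theorem holderExp_eq_sSup_holderSet : holderExp Z t = sSup (holderSet Z t) := rfl

theorem mem_holderSet_iff :
    α ∈ holderSet Z t ↔ 0 ≤ α ∧ ∃ C > (0:ℝ), ∀ᶠ s in 𝓝 t, |Z s - Z t| ≤ C * |s - t| ^ α := by
  simp only [holderSet, mem_ofPred_eq, Metric.eventually_nhds_iff, Real.dist_eq]

theorem holderSet_congr (h : Z₁ =ᶠ[𝓝 t] Z₂) : holderSet Z₁ t = holderSet Z₂ t := by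
  ext α
  have hbound : ∀ C : ℝ, (∀ᶠ s in 𝓝 t, |Z₁ s - Z₁ t| ≤ C * |s - t| ^ α) ↔
      ∀ᶠ s in 𝓝 t, |Z₂ s - Z₂ t| ≤ C * |s - t| ^ α := fun C =>
    eventually_congr (h.mono fun s hs => by rw [hs, h.eq_of_nhds])
  simp only [mem_holderSet_iff, hbound]

/-- `holderExp` is junk (`0`) when `holderSet` is unbounded; positivity rules this out. -/
theorem holderExp_le_holderExp_of_holderSet_subset (hpos : 0 < holderExp Z₂ t₂)
    (h : holderSet Z₁ t₁ ⊆ holderSet Z₂ t₂) : holderExp Z₁ t₁ ≤ holderExp Z₂ t₂ := by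
  have hbdd : BddAbove (holderSet Z₂ t₂) := by
    by_contra hunbdd
    rw [holderExp_eq_sSup_holderSet, Real.sSup_of_not_bddAbove hunbdd] at hpos
    exact lt_irrefl 0 hpos
  exact Real.sSup_le (fun β hβ => le_csSup hbdd (h hβ)) hpos.le

theorem holderSet_subset_holderSet_comp {g f : ℝ → ℝ}
    (hf : (fun s => f s - f t) =O[𝓝 t] (fun s => s - t)) :
    holderSet g (f t) ⊆ holderSet (g ∘ f) t := by
  intro β hβ
  rw [mem_holderSet_iff] at hβ ⊢
  obtain ⟨hβ0, C, hC, hg⟩ := hβ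
  obtain ⟨K, hK, hfK⟩ := hf.exists_pos
  have hf_tendsto : Tendsto f (𝓝 t) (𝓝 (f t)) :=
    tendsto_sub_nhds_zero_iff.1 (hf.trans_tendsto (tendsto_sub_nhds_zero_iff.2 tendsto_id))
  refine ⟨hβ0, C * K ^ β, by positivity, ?_⟩
  filter_upwards [hf_tendsto.eventually hg, hfK.bound] with s hgs hfs
  rw [Real.norm_eq_abs, Real.norm_eq_abs] at hfs
  calc |g (f s) - g (f t)| ≤ C * |f s - f t| ^ β := hgs
    _ ≤ C * (K * |s - t|) ^ β := by gcongr
    _ = C * K ^ β * |s - t| ^ β := by rw [Real.mul_rpow hK.le (abs_nonneg _), mul_assoc]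

end HolderExponent

theorem MonotoneOn.exists_mem_Ioo_differentiableAt {f : ℝ → ℝ} {a b : ℝ}
    (hf : MonotoneOn f (Ioo a b)) (hab : a < b) : ∃ t ∈ Ioo a b, DifferentiableAt ℝ f t := by
  have hvol : volume (Ioo a b) ≠ 0 := by simp [Real.volume_Ioo, hab]
  obtain ⟨t, ht, hdiff⟩ :=
    Measure.exists_mem_of_measure_ne_zero_of_ae hvol
      (hf.ae_differentiableWithinAt measurableSet_Ioo)
  exact ⟨t, ht, hdiff.differentiableAt (Ioo_mem_nhds ht.1 ht.2)⟩

theorem stmt3_general (g1 g2 : ℝ → ℝ) (H1 H2 : ℝ)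
    (h1 : 0 < H1) (h12 : H1 < H2)
    (hg1 : ∀ t ∈ Icc (0:ℝ) 1, holderExp g1 t = H1)
    (hg2 : ∀ t ∈ Icc (0:ℝ) 1, holderExp g2 t = H2) :
    ¬ ∃ f : ℝ → ℝ, ContinuousOn f (Icc 0 1) ∧ StrictMonoOn f (Icc 0 1) ∧
      Set.MapsTo f (Icc 0 1) (Icc (0:ℝ) 1) ∧ Set.SurjOn f (Icc 0 1) (Icc (0:ℝ) 1) ∧
      ∀ t ∈ Icc (0:ℝ) 1, g1 t = g2 (f t) := by
  rintro ⟨f, -, hmono, hmaps, -, heq⟩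
  obtain ⟨t, ht, hdiff⟩ :=
    (hmono.monotoneOn.mono Ioo_subset_Icc_self).exists_mem_Ioo_differentiableAt zero_lt_one
  have htIcc : t ∈ Icc (0:ℝ) 1 := Ioo_subset_Icc_self ht
  have hcomp : g1 =ᶠ[𝓝 t] g2 ∘ f :=
    eventually_of_mem (Icc_mem_nhds ht.1 ht.2) fun s hs => heq s hs
  have hexp : holderExp g2 (f t) ≤ holderExp g1 t :=
    holderExp_le_holderExp_of_holderSet_subset (by rw [hg1 t htIcc]; exact h1)
      ((holderSet_subset_holderSet_comp hdiff.isBigO_sub).trans (holderSet_congr hcomp).ge)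
  rw [hg1 t htIcc, hg2 (f t) (hmaps htIcc)] at hexp
  exact hexp.not_gt h12

theorem stmt3 (g1 g2 : ℝ → ℝ) (H1 H2 : ℝ)
    (h1 : 0 < H1) (h12 : H1 < H2) (h2 : H2 < 1)
    (hg1 : ∀ t ∈ Icc (0:ℝ) 1, holderExp g1 t = H1)
    (hg2 : ∀ t ∈ Icc (0:ℝ) 1, holderExp g2 t = H2) :
    ¬ ∃ f : ℝ → ℝ, ContinuousOn f (Icc 0 1) ∧ StrictMonoOn f (Icc 0 1) ∧
      Set.MapsTo f (Icc 0 1) (Icc (0:ℝ) 1) ∧ Set.SurjOn f (Icc 0 1) (Icc (0:ℝ) 1) ∧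
      ∀ t ∈ Icc (0:ℝ) 1, g1 t = g2 (f t) :=
  stmt3_general g1 g2 H1 H2 h1 h12 hg1 hg2
end

section
/- Let Z : [0,1] → ℝ be continuous, H ∈ (0,1), and suppose (T_n)_{n≥1} is a nested sequence of finite partitions of [0,1] into non-trivial intervals with max_{T∈T_n}|T| → 0, such that each T ∈ T_n is contained in a unique T' ∈ T_{n−1} with |T'|^{1+ε_n} ≤ |T| ≤ |T'| for some sequence ε_n → 0. If there is a positive sequence κ_n → 0 with ω_T(Z) ≥ |T|^{H+κ_n} for every T ∈ T_n, then the pointwise Hölder exponent of Z satisfies h_Z(t) ≤ H for every t ∈ (0,1). -/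
/-!
If `Z` satisfied `|Z s - Z t| ≤ C |s - t|^α` near `t` with `α > H`, then on every small interval
`I ∋ t` of the partitions the oscillation would be at most `2 C |I|^α`. Against the lower bound
`|I|^(H + κ_n)` with `κ_n → 0` and `|I| → 0` this forces `1 ≤ 2 C |I|^γ` for some fixed `γ > 0`,
which fails once `|I|` is small enough.
-/

open Set Filter Topology

/-- Oscillation of `Z` on a set `I`. -/
noncomputable def osc (Z : ℝ → ℝ) (I : Set ℝ) : ℝ := sSup (Z '' I) - sInf (Z '' I)

theorem osc_le_two_mul {Z : ℝ → ℝ} {I : Set ℝ} {x M : ℝ} (hx : x ∈ I)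
    (h : ∀ s ∈ I, |Z s - Z x| ≤ M) : osc Z I ≤ 2 * M := by
  have hne : (Z '' I).Nonempty := ⟨Z x, x, hx, rfl⟩
  have hsup : sSup (Z '' I) ≤ Z x + M :=
    csSup_le hne <| by rintro _ ⟨s, hs, rfl⟩; linarith [(abs_le.mp (h s hs)).2]
  have hinf : Z x - M ≤ sInf (Z '' I) :=
    le_csInf hne <| by rintro _ ⟨s, hs, rfl⟩; linarith [(abs_le.mp (h s hs)).1]
  unfold osc
  linarith

theorem osc_Icc_le_of_holderAt {Z : ℝ → ℝ} {t C δ α a b : ℝ} (hC : 0 ≤ C) (hα : 0 ≤ α)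
    (hHolder : ∀ s, |s - t| < δ → |Z s - Z t| ≤ C * |s - t| ^ α)
    (ht : t ∈ Icc a b) (hδ : b - a < δ) : osc Z (Icc a b) ≤ 2 * (C * (b - a) ^ α) := by
  refine osc_le_two_mul ht fun s hs => ?_
  have hst : |s - t| ≤ b - a := abs_sub_le_iff.mpr ⟨by linarith [hs.2, ht.1], by linarith [hs.1, ht.2]⟩
  calc |Z s - Z t| ≤ C * |s - t| ^ α := hHolder s (hst.trans_lt hδ)
    _ ≤ C * (b - a) ^ α := by gcongr

theorem le_of_rpow_le_mul_rpow {L κ : ℕ → ℝ} {H α C : ℝ} (hLpos : ∀ n, 0 < L n)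
    (hL : Tendsto L atTop (𝓝 0)) (hκ : Tendsto κ atTop (𝓝 0))
    (hbound : ∀ᶠ n in atTop, L n ^ (H + κ n) ≤ C * L n ^ α) : α ≤ H := by
  by_contra! hHα
  set γ := (α - H) / 2
  have hγ : 0 < γ := by simp only [γ]; linarith
  have hLγ : Tendsto (fun n => C * L n ^ γ) atTop (𝓝 0) := by
    simpa [Real.zero_rpow hγ.ne'] using (hL.rpow_const (Or.inr hγ.le)).const_mul C
  obtain ⟨n, hbound, hκγ, hL1, hsmall⟩ := (hbound.and <| (hκ.eventually_lt_const hγ).and <|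
    (hL.eventually_le_const zero_lt_one).and (hLγ.eventually_lt_const zero_lt_one)).exists
  have hpos : 0 < L n ^ (H + γ) := Real.rpow_pos_of_pos (hLpos n) _
  have hsplit : L n ^ α = L n ^ γ * L n ^ (H + γ) := by
    rw [← Real.rpow_add (hLpos n)]; congr 1; simp only [γ]; ring
  have : L n ^ (H + γ) < L n ^ (H + γ) :=
    calc L n ^ (H + γ) ≤ L n ^ (H + κ n) :=
          Real.rpow_le_rpow_of_exponent_ge (hLpos n) hL1 (by linarith)
      _ ≤ C * L n ^ α := hbound
      _ = C * L n ^ γ * L n ^ (H + γ) := by rw [hsplit, mul_assoc]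
      _ < 1 * L n ^ (H + γ) := by gcongr
      _ = L n ^ (H + γ) := one_mul _
  exact lt_irrefl _ this

theorem stmt4_general (Z : ℝ → ℝ) (H : ℝ) (hH : H ∈ Ioo (0:ℝ) 1)
    (T : ℕ → Finset (ℝ × ℝ)) (κ : ℕ → ℝ)
    -- each partition is made of non-trivial subintervals of [0,1]
    (hnt : ∀ n, ∀ p ∈ T n, p.1 < p.2)
    -- covering of [0,1]
    (hcover : ∀ n, (⋃ p ∈ T n, Icc p.1 p.2) = Icc (0:ℝ) 1)
    -- maximal diameters tend to 0
    (hmax : ∀ δ > (0:ℝ), ∃ N, ∀ n ≥ N, ∀ p ∈ T n, p.2 - p.1 ≤ δ)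
    (hκ : Tendsto κ atTop (𝓝 0))
    -- lower bound on oscillations
    (hosc : ∀ n, ∀ p ∈ T n, (p.2 - p.1) ^ (H + κ n) ≤ osc Z (Icc p.1 p.2)) :
    ∀ t ∈ Ioo (0:ℝ) 1, holderExp Z t ≤ H := by
  intro t ht
  have htI (n : ℕ) : t ∈ ⋃ p ∈ T n, Icc p.1 p.2 := by rw [hcover n]; exact Ioo_subset_Icc_self ht
  choose p hpT htp using fun n => mem_iUnion₂.mp (htI n)
  set L := fun n => (p n).2 - (p n).1
  have hLpos (n : ℕ) : 0 < L n := sub_pos.mpr (hnt n _ (hpT n))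
  have hL : Tendsto L atTop (𝓝 0) := by
    refine tendsto_order.mpr ⟨fun a ha => .of_forall fun n => ha.trans (hLpos n), fun a ha => ?_⟩
    obtain ⟨N, hN⟩ := hmax (a / 2) (half_pos ha)
    exact eventually_atTop.mpr ⟨N, fun n hn => (hN n hn _ (hpT n)).trans_lt (half_lt_self ha)⟩
  refine Real.sSup_le ?_ hH.1.le
  rintro α ⟨hα, C, hC, δ, hδ, hHolder⟩
  refine le_of_rpow_le_mul_rpow (C := 2 * C) hLpos hL hκ ?_
  filter_upwards [hL.eventually_lt_const hδ] with n hn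
  exact (hosc n _ (hpT n)).trans <|
    (osc_Icc_le_of_holderAt hC.le hα hHolder (htp n) hn).trans_eq (mul_assoc _ _ _).symm

theorem stmt4 (Z : ℝ → ℝ) (hZ : ContinuousOn Z (Icc 0 1)) (H : ℝ) (hH : H ∈ Ioo (0:ℝ) 1)
    (T : ℕ → Finset (ℝ × ℝ)) (ε κ : ℕ → ℝ)
    -- each partition is made of non-trivial subintervals of [0,1]
    (hnt : ∀ n, ∀ p ∈ T n, p.1 < p.2)
    (hsub : ∀ n, ∀ p ∈ T n, Icc p.1 p.2 ⊆ Icc (0:ℝ) 1)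
    -- covering of [0,1]
    (hcover : ∀ n, (⋃ p ∈ T n, Icc p.1 p.2) = Icc (0:ℝ) 1)
    -- pairwise disjoint interiors
    (hdisj : ∀ n, ∀ p ∈ T n, ∀ q ∈ T n, p ≠ q → Ioo p.1 p.2 ∩ Ioo q.1 q.2 = ∅)
    -- maximal diameters tend to 0
    (hmax : ∀ δ > (0:ℝ), ∃ N, ∀ n ≥ N, ∀ p ∈ T n, p.2 - p.1 ≤ δ)
    -- nestedness: each interval of T (n+1) is included in a unique interval of T n,
    -- with comparable sizes
    (hnest : ∀ n, ∀ p ∈ T (n+1), ∃! q, q ∈ T n ∧ Icc p.1 p.2 ⊆ Icc q.1 q.2 ∧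
      (q.2 - q.1) ^ (1 + ε (n+1)) ≤ p.2 - p.1 ∧ p.2 - p.1 ≤ q.2 - q.1)
    (hεpos : ∀ n, 0 ≤ ε n) (hε : Tendsto ε atTop (𝓝 0))
    (hκpos : ∀ n, 0 < κ n) (hκ : Tendsto κ atTop (𝓝 0))
    -- lower bound on oscillations
    (hosc : ∀ n, ∀ p ∈ T n, (p.2 - p.1) ^ (H + κ n) ≤ osc Z (Icc p.1 p.2)) :
    ∀ t ∈ Ioo (0:ℝ) 1, holderExp Z t ≤ H :=
  stmt4_general Z H hH T κ hnt hcover hmax hκ hosc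
end

section
/- Let 0 < α < 1, C > 1, and let Z : [0,1] → ℝ be continuous with C^{-1}·2^{-jα} ≤ ω_{j,k}(Z) ≤ C·2^{-jα} for every j ≥ 1 and 0 ≤ k ≤ 2^j−1. Then the sequence H_j(Z), defined by ∑_{k=0}^{2^j−1}(ω_{j,k}(Z))^{1/H_j(Z)} = 1, converges to α; moreover there is a constant C' such that |H_j(Z) − α| ≤ C'/j for all j large enough. -/
open Set Filter Topology

/-- Oscillation of `Z` on the dyadic interval `[k 2^{-j}, (k+1) 2^{-j}]`. -/
noncomputable def dyadicOsc (Z : ℝ → ℝ) (j k : ℕ) : ℝ :=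
  osc Z (Icc ((k : ℝ) / 2 ^ j) (((k : ℝ) + 1) / 2 ^ j))

/-!
If `n` numbers lie in `[a, b]` and their `1/H`-th powers sum to `1`, then the "average scale"
`n^{-H}` also lies in `[a, b]`. With `n = 2^j`, `a = C⁻¹ 2^{-jα}` and `b = C 2^{-jα}` this says
that `2^{-j H_j}` and `2^{-jα}` differ by a factor at most `C`, i.e. `j |H_j - α| ≤ log₂ C`.
-/

theorem card_rpow_neg_mem_Icc_of_sum_rpow_eq_one {ι : Type*} (s : Finset ι) (f : ι → ℝ)
    {a b h : ℝ} (ha : 0 < a) (hh : 0 < h) (hf : ∀ k ∈ s, a ≤ f k ∧ f k ≤ b)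
    (hsum : ∑ k ∈ s, f k ^ (1 / h) = 1) :
    (s.card : ℝ) ^ (-h) ∈ Icc a b := by
  obtain ⟨k₀, hk₀⟩ : s.Nonempty := Finset.nonempty_of_sum_ne_zero (hsum ▸ one_ne_zero)
  set n : ℝ := (s.card : ℝ)
  have hn : 0 < n := by simpa [n] using Finset.card_pos.mpr ⟨k₀, hk₀⟩
  have hb : 0 ≤ b := ha.le.trans ((hf k₀ hk₀).1.trans (hf k₀ hk₀).2)
  have hmono : ∀ x y : ℝ, 0 ≤ x → 0 ≤ y → (x ≤ y ↔ n * x ^ (1 / h) ≤ n * y ^ (1 / h)) :=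
    fun x y hx hy => by
      rw [mul_le_mul_iff_right₀ hn, Real.rpow_le_rpow_iff hx hy (by positivity)]
  have hscale : n * (n ^ (-h)) ^ (1 / h) = 1 := by
    rw [← Real.rpow_mul hn.le, neg_mul, mul_one_div_cancel hh.ne', Real.rpow_neg_one,
      mul_inv_cancel₀ hn.ne']
  constructor
  · rw [hmono a _ ha.le (by positivity), hscale]
    calc n * a ^ (1 / h) = ∑ _k ∈ s, a ^ (1 / h) := by simp [n]
      _ ≤ ∑ k ∈ s, f k ^ (1 / h) := Finset.sum_le_sum fun k hk =>
          Real.rpow_le_rpow ha.le (hf k hk).1 (by positivity)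
      _ = 1 := hsum
  · rw [hmono _ b (by positivity) hb, hscale]
    calc 1 = ∑ k ∈ s, f k ^ (1 / h) := hsum.symm
      _ ≤ ∑ _k ∈ s, b ^ (1 / h) := Finset.sum_le_sum fun k hk =>
          Real.rpow_le_rpow (ha.le.trans (hf k hk).1) (hf k hk).2 (by positivity)
      _ = n * b ^ (1 / h) := by simp [n]

theorem abs_sub_le_logb_of_rpow_mem_Icc {β C x y : ℝ} (hβ : 1 < β) (hC : 0 < C)
    (hy : β ^ y ∈ Icc (C⁻¹ * β ^ x) (C * β ^ x)) :
    |y - x| ≤ Real.logb β C := by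
  have hlogβ : 0 < Real.log β := Real.log_pos hβ
  have hβx : 0 < β ^ x := Real.rpow_pos_of_pos (by linarith) x
  have hlog := And.intro (Real.log_le_log (by positivity) hy.1)
    (Real.log_le_log (by positivity) hy.2)
  rw [Real.log_mul (by positivity) hβx.ne', Real.log_mul hC.ne' hβx.ne', Real.log_inv,
    Real.log_rpow (by linarith), Real.log_rpow (by linarith)] at hlog
  rw [Real.logb, abs_sub_le_iff, le_div_iff₀ hlogβ, le_div_iff₀ hlogβ]
  constructor <;> linarith [hlog.1, hlog.2]

theorem stmt12_general (α C : ℝ) (hC : 1 < C) (Z : ℝ → ℝ)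
    (hosc : ∀ j : ℕ, 1 ≤ j → ∀ k < 2 ^ j,
      C⁻¹ * (2:ℝ) ^ (-(j:ℝ) * α) ≤ dyadicOsc Z j k ∧
      dyadicOsc Z j k ≤ C * (2:ℝ) ^ (-(j:ℝ) * α))
    (Hfun : ℕ → ℝ)
    (hH : ∀ j : ℕ, 1 ≤ j → 0 < Hfun j ∧
      ∑ k ∈ Finset.range (2 ^ j), dyadicOsc Z j k ^ (1 / Hfun j) = 1) :
    Tendsto Hfun atTop (𝓝 α) ∧
    ∃ C' > (0:ℝ), ∃ J : ℕ, ∀ j ≥ J, |Hfun j - α| ≤ C' / (j : ℝ) := by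
  have hCpos : 0 < C := one_pos.trans hC
  have hrate : ∀ j ≥ 1, |Hfun j - α| ≤ Real.logb 2 C / j := by
    intro j hj
    obtain ⟨hHpos, hsum⟩ := hH j hj
    have hscale := card_rpow_neg_mem_Icc_of_sum_rpow_eq_one _ _ (by positivity) hHpos
      (fun k hk => hosc j hj k (Finset.mem_range.mp hk)) hsum
    rw [Finset.card_range, Nat.cast_pow, Nat.cast_ofNat, ← Real.rpow_natCast_mul zero_le_two]
      at hscale
    have hj' : (0 : ℝ) < j := by exact_mod_cast hj
    have hbound := abs_sub_le_logb_of_rpow_mem_Icc one_lt_two hCpos hscale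
    rwa [show (j : ℝ) * -Hfun j - -j * α = -((Hfun j - α) * j) by ring, abs_neg, abs_mul,
      abs_of_pos hj', ← le_div_iff₀ hj'] at hbound
  have hlim : Tendsto (fun j : ℕ => |Hfun j - α|) atTop (𝓝 0) :=
    squeeze_zero' (Eventually.of_forall fun j => abs_nonneg _)
      (eventually_atTop.mpr ⟨1, hrate⟩) (tendsto_const_div_atTop_nhds_zero_nat _)
  refine ⟨?_, Real.logb 2 C, Real.logb_pos one_lt_two hC, 1, hrate⟩
  rw [tendsto_iff_dist_tendsto_zero]
  simpa [Real.dist_eq] using hlim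

theorem stmt12 (α C : ℝ) (hα : α ∈ Ioo (0:ℝ) 1) (hC : 1 < C)
    (Z : ℝ → ℝ) (hZ : ContinuousOn Z (Icc 0 1))
    (hosc : ∀ j : ℕ, 1 ≤ j → ∀ k < 2 ^ j,
      C⁻¹ * (2:ℝ) ^ (-(j:ℝ) * α) ≤ dyadicOsc Z j k ∧
      dyadicOsc Z j k ≤ C * (2:ℝ) ^ (-(j:ℝ) * α))
    (Hfun : ℕ → ℝ)
    (hH : ∀ j : ℕ, 1 ≤ j → 0 < Hfun j ∧
      ∑ k ∈ Finset.range (2 ^ j), dyadicOsc Z j k ^ (1 / Hfun j) = 1) :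
    Tendsto Hfun atTop (𝓝 α) ∧
    ∃ C' > (0:ℝ), ∃ J : ℕ, ∀ j ≥ J, |Hfun j - α| ≤ C' / (j : ℝ) :=
  stmt12_general α C hC Z hosc Hfun hH
end

section
/- Let C > 1, β > 1, and let μ be a Borel probability measure on [0,1] with μ(I_{j,k}) > 0 for all dyadic intervals. Suppose Z : [0,1] → ℝ is continuous with C^{-1}·μ(I_{j,k})^{1/β} ≤ ω_{j,k}(Z) ≤ C·μ(I_{j,k})^{1/β} for all j,k, and that there is M ≥ 1 with 2^{-jM} ≤ μ(I_{j,k}) ≤ 2^{-j/M} for all large j. Then H_j(Z) → 1/β as j → ∞, where H_j(Z) is defined by ∑_{k=0}^{2^j−1}(ω_{j,k}(Z))^{1/H_j(Z)} = 1; in particular the intrinsic exponent H(Z) = liminf_j H_j(Z) equals 1/β. -/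
open Set Filter Topology MeasureTheory

/-- Mass of the dyadic interval `[k 2^{-j}, (k+1) 2^{-j}]`. -/
noncomputable def dyadicMass (μ : Measure ℝ) (j k : ℕ) : ℝ :=
  (μ (Icc ((k : ℝ) / 2 ^ j) (((k : ℝ) + 1) / 2 ^ j))).toReal

/-!
Write `ω k` and `m k` for the oscillation and the mass of the `k`-th dyadic interval of level `j`,
and `r = 2 ^ (-j / M)`, so that eventually `m k ≤ r`. Since `ω k ≍ m k ^ (1 / β)`, writing
`m k ^ (q / β) = m k ^ (q / β - 1) * m k` gives `∑ ω k ^ q ≤ C ^ q r ^ (q / β - 1) ∑ m k` for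
`q ≥ β` and `∑ ω k ^ q ≥ C ^ (-q) r ^ (q / β - 1) ∑ m k` for `q ≤ β`, while `∑ m k ∈ [1, 2]` (the
closed intervals cover `[0, 1]` and overlap only at endpoints). As `r → 0`, the sum tends to `0`
for `q > β` and to `∞` for `q < β`. Once every `ω k ≤ 1`, `q ↦ ∑ ω k ^ q` is antitone, so the
exponent `1 / H_j` solving `∑ ω k ^ (1 / H_j) = 1` is eventually trapped near `β`.
-/

open Finset in
lemma Icc_zero_one_subset_biUnion_Icc (n : ℕ) (hn : 0 < n) :
    Icc (0:ℝ) 1 ⊆ ⋃ k ∈ range n, Icc ((k : ℝ) / n) (((k : ℝ) + 1) / n) := by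
  intro x ⟨hx0, hx1⟩
  have hn' : (0:ℝ) < n := by exact_mod_cast hn
  set k := min ⌊x * n⌋₊ (n - 1)
  have hk1 : ((k + 1 : ℕ) : ℝ) = min ((⌊x * n⌋₊ + 1 : ℕ) : ℝ) n := by
    rw [← Nat.cast_min]; congr 1; omega
  push_cast at hk1
  refine Set.mem_iUnion₂.2 ⟨k, mem_range.2 (by omega), ?_, ?_⟩
  · rw [div_le_iff₀ hn']
    exact (Nat.cast_le.2 (min_le_left _ _)).trans (Nat.floor_le (by positivity))
  · rw [le_div_iff₀ hn', hk1]
    exact le_min (Nat.lt_floor_add_one _).le (by nlinarith)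

lemma measureReal_Icc_zero_one_le_sum_dyadicMass (μ : Measure ℝ) [IsFiniteMeasure μ] (j : ℕ) :
    μ.real (Icc 0 1) ≤ ∑ k ∈ Finset.range (2 ^ j), dyadicMass μ j k := by
  have hcover := Icc_zero_one_subset_biUnion_Icc (2 ^ j) (by positivity)
  push_cast at hcover
  exact (measureReal_mono hcover (measure_ne_top _ _)).trans (measureReal_biUnion_finset_le _ _)

lemma sum_dyadicMass_le_two_mul (μ : Measure ℝ) [IsFiniteMeasure μ] (j : ℕ) :
    ∑ k ∈ Finset.range (2 ^ j), dyadicMass μ j k ≤ 2 * μ.real univ := by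
  set a : ℕ → ℝ := fun k => (k : ℝ) / 2 ^ j
  have ha : StrictMono a := fun k l hkl => by
    simp only [a]; gcongr
  have hIco : ∑ k ∈ Finset.range (2 ^ j), μ.real (Ico (a k) (a (k + 1))) ≤ μ.real univ :=
    sum_measureReal_le_measureReal_univ (fun _ _ => measurableSet_Ico)
      ((ha.monotone.pairwise_disjoint_on_Ico_succ).set_pairwise _)
  have hpt : ∑ k ∈ Finset.range (2 ^ j), μ.real {a (k + 1)} ≤ μ.real univ :=
    sum_measureReal_le_measureReal_univ (fun _ _ => measurableSet_singleton _)
      (fun k _ l _ hkl => disjoint_singleton.2 fun h => hkl (Nat.succ_injective (ha.injective h)))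
  calc ∑ k ∈ Finset.range (2 ^ j), dyadicMass μ j k
      ≤ ∑ k ∈ Finset.range (2 ^ j), (μ.real {a (k + 1)} + μ.real (Ico (a k) (a (k + 1)))) := by
        refine Finset.sum_le_sum fun k _ => le_of_eq_of_le ?_ (measureReal_union_le _ _)
        rw [← insert_eq, Ico_insert_right (ha.monotone k.le_succ)]
        simp [a, dyadicMass, measureReal_def]
    _ ≤ 2 * μ.real univ := by
        rw [Finset.sum_add_distrib]; linarith

section RpowBounds

variable {ι : Type*} {s : Finset ι} {w m : ι → ℝ} {c β q r : ℝ}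

lemma lt_of_sum_rpow_eq_one_of_one_lt_sum_rpow {p : ℝ} (hw : ∀ i ∈ s, 0 < w i ∧ w i ≤ 1)
    (hp : ∑ i ∈ s, w i ^ p = 1) (hq : 1 < ∑ i ∈ s, w i ^ q) : q < p := by
  by_contra! hpq
  refine hq.not_ge (hp ▸ Finset.sum_le_sum fun i hi => ?_)
  exact Real.rpow_le_rpow_of_exponent_ge (hw i hi).1 (hw i hi).2 hpq

lemma lt_of_sum_rpow_eq_one_of_sum_rpow_lt_one {p : ℝ} (hw : ∀ i ∈ s, 0 < w i ∧ w i ≤ 1)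
    (hp : ∑ i ∈ s, w i ^ p = 1) (hq : ∑ i ∈ s, w i ^ q < 1) : p < q := by
  by_contra! hpq
  refine hq.not_ge (hp ▸ Finset.sum_le_sum fun i hi => ?_)
  exact Real.rpow_le_rpow_of_exponent_ge (hw i hi).1 (hw i hi).2 hpq

lemma mul_rpow_one_div_rpow (hc : 0 ≤ c) {x : ℝ} (hx : 0 ≤ x) :
    (c * x ^ (1 / β)) ^ q = c ^ q * x ^ (q / β) := by
  rw [Real.mul_rpow hc (by positivity), ← Real.rpow_mul hx, one_div_mul_eq_div]

lemma rpow_le_rpow_sub_one_mul {x : ℝ} (hx : 0 < x) (hxr : x ≤ r) (hq : 1 ≤ q) :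
    x ^ q ≤ r ^ (q - 1) * x := by
  rw [← sub_add_cancel q 1, Real.rpow_add_one hx.ne', add_sub_cancel_right]
  gcongr

lemma rpow_sub_one_mul_le_rpow {x : ℝ} (hx : 0 < x) (hxr : x ≤ r) (hq : q ≤ 1) :
    r ^ (q - 1) * x ≤ x ^ q := by
  rw [← sub_add_cancel q 1, Real.rpow_add_one hx.ne', add_sub_cancel_right]
  exact mul_le_mul_of_nonneg_right (Real.rpow_le_rpow_of_nonpos hx hxr (by linarith)) hx.le

lemma sum_rpow_le_of_le_mul_rpow (hc : 0 ≤ c) (hβ : 0 < β) (hq : β ≤ q)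
    (hm : ∀ i ∈ s, 0 < m i ∧ m i ≤ r) (hw : ∀ i ∈ s, 0 ≤ w i ∧ w i ≤ c * m i ^ (1 / β)) :
    ∑ i ∈ s, w i ^ q ≤ c ^ q * r ^ (q / β - 1) * ∑ i ∈ s, m i := by
  rw [Finset.mul_sum]
  refine Finset.sum_le_sum fun i hi => ?_
  obtain ⟨hm0, hmr⟩ := hm i hi
  calc w i ^ q ≤ (c * m i ^ (1 / β)) ^ q :=
        Real.rpow_le_rpow (hw i hi).1 (hw i hi).2 (by linarith)
    _ = c ^ q * m i ^ (q / β) := mul_rpow_one_div_rpow hc hm0.le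
    _ ≤ c ^ q * (r ^ (q / β - 1) * m i) := by
        gcongr
        exact rpow_le_rpow_sub_one_mul hm0 hmr ((one_le_div hβ).2 hq)
    _ = _ := by ring

lemma mul_sum_le_sum_rpow_of_mul_rpow_le (hc : 0 ≤ c) (hβ : 0 < β) (hq0 : 0 ≤ q) (hq : q ≤ β)
    (hm : ∀ i ∈ s, 0 < m i ∧ m i ≤ r) (hw : ∀ i ∈ s, c * m i ^ (1 / β) ≤ w i) :
    c ^ q * r ^ (q / β - 1) * ∑ i ∈ s, m i ≤ ∑ i ∈ s, w i ^ q := by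
  rw [Finset.mul_sum]
  refine Finset.sum_le_sum fun i hi => ?_
  obtain ⟨hm0, hmr⟩ := hm i hi
  calc c ^ q * r ^ (q / β - 1) * m i = c ^ q * (r ^ (q / β - 1) * m i) := by ring
    _ ≤ c ^ q * m i ^ (q / β) := by
        gcongr
        exact rpow_sub_one_mul_le_rpow hm0 hmr ((div_le_one hβ).2 hq)
    _ = (c * m i ^ (1 / β)) ^ q := (mul_rpow_one_div_rpow hc hm0.le).symm
    _ ≤ w i ^ q := Real.rpow_le_rpow (mul_nonneg hc (Real.rpow_nonneg hm0.le _)) (hw i hi) hq0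

end RpowBounds

lemma tendsto_two_rpow_neg_natCast_div_nhdsGT {M : ℝ} (hM : 0 < M) :
    Tendsto (fun j : ℕ => (2:ℝ) ^ (-(j:ℝ) / M)) atTop (𝓝[>] 0) := by
  refine tendsto_nhdsWithin_iff.2 ⟨?_, Eventually.of_forall fun _ => Real.rpow_pos_of_pos two_pos _⟩
  refine (tendsto_rpow_atBot_of_base_gt_one 2 one_lt_two).comp ?_
  simp_rw [neg_div]
  exact tendsto_neg_atTop_atBot.comp (tendsto_natCast_atTop_atTop.atTop_div_const hM)

section DyadicScaling

variable {μ : Measure ℝ} {Z : ℝ → ℝ} {C β M t : ℝ}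

lemma tendsto_two_rpow_neg_natCast_div_rpow_of_pos (hM : 0 < M) (ht : 0 < t) :
    Tendsto (fun j : ℕ => ((2:ℝ) ^ (-(j:ℝ) / M)) ^ t) atTop (𝓝 0) := by
  simpa [Real.zero_rpow ht.ne'] using
    ((tendsto_two_rpow_neg_natCast_div_nhdsGT hM).mono_right nhdsWithin_le_nhds).rpow_const
      (Or.inr ht.le)

lemma tendsto_two_rpow_neg_natCast_div_rpow_of_neg (hM : 0 < M) (ht : t < 0) :
    Tendsto (fun j : ℕ => ((2:ℝ) ^ (-(j:ℝ) / M)) ^ t) atTop atTop :=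
  (tendsto_rpow_neg_nhdsGT_zero ht).comp (tendsto_two_rpow_neg_natCast_div_nhdsGT hM)

lemma eventually_dyadicOsc_le_one (hC : 0 ≤ C) (hβ : 0 < β) (hM : 0 < M)
    (hmass : ∀ᶠ j in atTop, ∀ k < 2 ^ j,
      0 < dyadicMass μ j k ∧ dyadicMass μ j k ≤ (2:ℝ) ^ (-(j:ℝ) / M))
    (hosc : ∀ j : ℕ, ∀ k < 2 ^ j, dyadicOsc Z j k ≤ C * dyadicMass μ j k ^ (1 / β)) :
    ∀ᶠ j in atTop, ∀ k < 2 ^ j, dyadicOsc Z j k ≤ 1 := by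
  have hlim : Tendsto (fun j : ℕ => C * ((2:ℝ) ^ (-(j:ℝ) / M)) ^ (1 / β)) atTop (𝓝 0) := by
    simpa using (tendsto_two_rpow_neg_natCast_div_rpow_of_pos hM (one_div_pos.2 hβ)).const_mul C
  filter_upwards [hlim.eventually (ge_mem_nhds one_pos), hmass] with j hj hmj k hk
  calc dyadicOsc Z j k ≤ C * dyadicMass μ j k ^ (1 / β) := hosc j k hk
    _ ≤ C * ((2:ℝ) ^ (-(j:ℝ) / M)) ^ (1 / β) := by
        gcongr
        exacts [(hmj k hk).1.le, (hmj k hk).2]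
    _ ≤ 1 := hj

lemma eventually_sum_dyadicOsc_rpow_lt_one [IsFiniteMeasure μ] (hC : 0 ≤ C) (hβ : 0 < β)
    (hM : 0 < M) {q : ℝ} (hq : β < q)
    (hmass : ∀ᶠ j in atTop, ∀ k < 2 ^ j,
      0 < dyadicMass μ j k ∧ dyadicMass μ j k ≤ (2:ℝ) ^ (-(j:ℝ) / M))
    (hosc : ∀ j : ℕ, ∀ k < 2 ^ j,
      0 ≤ dyadicOsc Z j k ∧ dyadicOsc Z j k ≤ C * dyadicMass μ j k ^ (1 / β)) :
    ∀ᶠ j in atTop, ∑ k ∈ Finset.range (2 ^ j), dyadicOsc Z j k ^ q < 1 := by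
  have ht : 0 < q / β - 1 := sub_pos.2 ((one_lt_div hβ).2 hq)
  have hlim : Tendsto (fun j : ℕ => C ^ q * ((2:ℝ) ^ (-(j:ℝ) / M)) ^ (q / β - 1) *
      (2 * μ.real univ)) atTop (𝓝 0) := by
    simpa using ((tendsto_two_rpow_neg_natCast_div_rpow_of_pos hM ht).const_mul (C ^ q)).mul_const
      (2 * μ.real univ)
  filter_upwards [hlim.eventually (gt_mem_nhds one_pos), hmass] with j hj hmj
  calc ∑ k ∈ Finset.range (2 ^ j), dyadicOsc Z j k ^ q
      ≤ C ^ q * ((2:ℝ) ^ (-(j:ℝ) / M)) ^ (q / β - 1) *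
          ∑ k ∈ Finset.range (2 ^ j), dyadicMass μ j k :=
        sum_rpow_le_of_le_mul_rpow hC hβ hq.le (fun k hk => hmj k (Finset.mem_range.1 hk))
          (fun k hk => hosc j k (Finset.mem_range.1 hk))
    _ ≤ C ^ q * ((2:ℝ) ^ (-(j:ℝ) / M)) ^ (q / β - 1) * (2 * μ.real univ) := by
        gcongr
        exact sum_dyadicMass_le_two_mul μ j
    _ < 1 := hj

lemma eventually_one_lt_sum_dyadicOsc_rpow [IsFiniteMeasure μ] (hμ : 0 < μ.real (Icc 0 1))
    (hC : 0 < C) (hβ : 0 < β) (hM : 0 < M) {q : ℝ} (hq0 : 0 ≤ q) (hq : q < β)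
    (hmass : ∀ᶠ j in atTop, ∀ k < 2 ^ j,
      0 < dyadicMass μ j k ∧ dyadicMass μ j k ≤ (2:ℝ) ^ (-(j:ℝ) / M))
    (hosc : ∀ j : ℕ, ∀ k < 2 ^ j, C⁻¹ * dyadicMass μ j k ^ (1 / β) ≤ dyadicOsc Z j k) :
    ∀ᶠ j in atTop, 1 < ∑ k ∈ Finset.range (2 ^ j), dyadicOsc Z j k ^ q := by
  have ht : q / β - 1 < 0 := sub_neg.2 ((div_lt_one hβ).2 hq)
  have hlim : Tendsto (fun j : ℕ => C⁻¹ ^ q * ((2:ℝ) ^ (-(j:ℝ) / M)) ^ (q / β - 1) *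
      μ.real (Icc 0 1)) atTop atTop :=
    ((tendsto_two_rpow_neg_natCast_div_rpow_of_neg hM ht).const_mul_atTop
      (by positivity)).atTop_mul_const hμ
  filter_upwards [hlim.eventually_gt_atTop 1, hmass] with j hj hmj
  calc 1 < C⁻¹ ^ q * ((2:ℝ) ^ (-(j:ℝ) / M)) ^ (q / β - 1) * μ.real (Icc 0 1) := hj
    _ ≤ C⁻¹ ^ q * ((2:ℝ) ^ (-(j:ℝ) / M)) ^ (q / β - 1) *
          ∑ k ∈ Finset.range (2 ^ j), dyadicMass μ j k := by
        gcongr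
        exact measureReal_Icc_zero_one_le_sum_dyadicMass μ j
    _ ≤ ∑ k ∈ Finset.range (2 ^ j), dyadicOsc Z j k ^ q :=
        mul_sum_le_sum_rpow_of_mul_rpow_le (inv_nonneg.2 hC.le) hβ hq0 hq.le
          (fun k hk => hmj k (Finset.mem_range.1 hk)) (fun k hk => hosc j k (Finset.mem_range.1 hk))

end DyadicScaling

theorem stmt19_general (C β : ℝ) (hC : 1 < C) (hβ : 1 < β)
    (μ : Measure ℝ) [IsProbabilityMeasure μ] (hμsupp : μ (Icc 0 1) = 1)
    (hpos : ∀ j : ℕ, ∀ k < 2 ^ j, 0 < dyadicMass μ j k)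
    (M : ℝ) (hM : 1 ≤ M)
    (hMbound : ∃ J : ℕ, ∀ j ≥ J, ∀ k < 2 ^ j,
      (2:ℝ) ^ (-(j:ℝ) * M) ≤ dyadicMass μ j k ∧ dyadicMass μ j k ≤ (2:ℝ) ^ (-(j:ℝ) / M))
    (Z : ℝ → ℝ)
    (hosc : ∀ j : ℕ, ∀ k < 2 ^ j,
      C⁻¹ * dyadicMass μ j k ^ (1 / β) ≤ dyadicOsc Z j k ∧
      dyadicOsc Z j k ≤ C * dyadicMass μ j k ^ (1 / β))
    (Hfun : ℕ → ℝ)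
    (hH : ∀ j : ℕ, 1 ≤ j → 0 < Hfun j ∧
      ∑ k ∈ Finset.range (2 ^ j), dyadicOsc Z j k ^ (1 / Hfun j) = 1) :
    Tendsto Hfun atTop (𝓝 (1 / β)) ∧ liminf Hfun atTop = 1 / β := by
  obtain ⟨J, hJ⟩ := hMbound
  have hC0 : 0 < C := by linarith
  have hβ0 : 0 < β := by linarith
  have hM0 : 0 < M := by linarith
  have hμ : 0 < μ.real (Icc 0 1) := by simp [measureReal_def, hμsupp]
  have hmass : ∀ᶠ j in atTop, ∀ k < 2 ^ j,
      0 < dyadicMass μ j k ∧ dyadicMass μ j k ≤ (2:ℝ) ^ (-(j:ℝ) / M) :=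
    eventually_atTop.2 ⟨J, fun j hj k hk => ⟨hpos j k hk, (hJ j hj k hk).2⟩⟩
  have hosc_pos : ∀ j : ℕ, ∀ k < 2 ^ j, 0 < dyadicOsc Z j k := fun j k hk =>
    (mul_pos (inv_pos.2 hC0) (Real.rpow_pos_of_pos (hpos j k hk) _)).trans_le (hosc j k hk).1
  have hosc_unit : ∀ᶠ j in atTop, ∀ k ∈ Finset.range (2 ^ j),
      0 < dyadicOsc Z j k ∧ dyadicOsc Z j k ≤ 1 := by
    filter_upwards [eventually_dyadicOsc_le_one hC0.le hβ0 hM0 hmass fun j k hk => (hosc j k hk).2]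
      with j hj k hk
    exact ⟨hosc_pos j k (Finset.mem_range.1 hk), hj k (Finset.mem_range.1 hk)⟩
  have hexp : Tendsto (fun j => 1 / Hfun j) atTop (𝓝 β) := by
    refine tendsto_order.2 ⟨fun a ha => ?_, fun b hb => ?_⟩
    · filter_upwards [eventually_one_lt_sum_dyadicOsc_rpow hμ hC0 hβ0 hM0 (le_max_right a 0)
          (max_lt ha hβ0) hmass fun j k hk => (hosc j k hk).1, hosc_unit, eventually_ge_atTop 1]
        with j hj hωj hj1
      exact (le_max_left a 0).trans_lt
        (lt_of_sum_rpow_eq_one_of_one_lt_sum_rpow hωj (hH j hj1).2 hj)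
    · filter_upwards [eventually_sum_dyadicOsc_rpow_lt_one hC0.le hβ0 hM0 hb hmass
          fun j k hk => ⟨(hosc_pos j k hk).le, (hosc j k hk).2⟩, hosc_unit, eventually_ge_atTop 1]
        with j hj hωj hj1
      exact lt_of_sum_rpow_eq_one_of_sum_rpow_lt_one hωj (hH j hj1).2 hj
  have hlim : Tendsto Hfun atTop (𝓝 (1 / β)) :=
    (tendsto_const_nhds.div hexp hβ0.ne').congr fun j => one_div_one_div (Hfun j)
  exact ⟨hlim, hlim.liminf_eq⟩

theorem stmt19 (C β : ℝ) (hC : 1 < C) (hβ : 1 < β)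
    (μ : Measure ℝ) [IsProbabilityMeasure μ] (hμsupp : μ (Icc 0 1) = 1)
    (hpos : ∀ j : ℕ, ∀ k < 2 ^ j, 0 < dyadicMass μ j k)
    (M : ℝ) (hM : 1 ≤ M)
    (hMbound : ∃ J : ℕ, ∀ j ≥ J, ∀ k < 2 ^ j,
      (2:ℝ) ^ (-(j:ℝ) * M) ≤ dyadicMass μ j k ∧ dyadicMass μ j k ≤ (2:ℝ) ^ (-(j:ℝ) / M))
    (Z : ℝ → ℝ) (hZ : ContinuousOn Z (Icc 0 1))
    (hosc : ∀ j : ℕ, ∀ k < 2 ^ j,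
      C⁻¹ * dyadicMass μ j k ^ (1 / β) ≤ dyadicOsc Z j k ∧
      dyadicOsc Z j k ≤ C * dyadicMass μ j k ^ (1 / β))
    (Hfun : ℕ → ℝ)
    (hH : ∀ j : ℕ, 1 ≤ j → 0 < Hfun j ∧
      ∑ k ∈ Finset.range (2 ^ j), dyadicOsc Z j k ^ (1 / Hfun j) = 1) :
    Tendsto Hfun atTop (𝓝 (1 / β)) ∧ liminf Hfun atTop = 1 / β :=
  stmt19_general C β hC hβ μ hμsupp hpos M hM hMbound Z hosc Hfun hH
end
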